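/- arXiv:2210.05488 — 3 statements merged into one kernel-verified Lean document; each statement's English description precedes it below -/
import Mathlib

section
/- If I is a two-sided ideal of a finite-dimensional algebra A over a field k, then the slice rank of the multiplication tensor of the quotient algebra A/I is at most the slice rank of the multiplication tensor of A. -/
open Module Finset

/-- A tensor (written in coordinates) is a *slice* if it factors as a vector times a matrix
in one of the three possible groupings of coordinates. -/
def IsSlice {k : Type*} {ι₁ ι₂ ι₃ : Type*} [CommRing k] (T : ι₁ → ι₂ → ι₃ → k) : Prop :=
  (∃ (f : ι₁ → k) (Q : ι₂ → ι₃ → k), ∀ i j l, T i j l = f i * Q j l) ∨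
  (∃ (f : ι₂ → k) (Q : ι₁ → ι₃ → k), ∀ i j l, T i j l = f j * Q i l) ∨
  (∃ (f : ι₃ → k) (Q : ι₁ → ι₂ → k), ∀ i j l, T i j l = f l * Q i j)

/-- The slice rank of a tensor: the least `r` such that the tensor is a sum of `r` slices. -/
noncomputable def sliceRank {k : Type*} {ι₁ ι₂ ι₃ : Type*} [CommRing k]
    (T : ι₁ → ι₂ → ι₃ → k) : ℕ :=
  sInf {r : ℕ | ∃ S : Fin r → ι₁ → ι₂ → ι₃ → k,
    (∀ m, IsSlice (S m)) ∧ ∀ i j l, T i j l = ∑ m, S m i j l}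

/-- The multiplication tensor of a finite-dimensional algebra `A` over `k`, written in
coordinates with respect to the basis `Module.finBasis k A`:
`T i j l` is the `l`-th coordinate of `e_i * e_j`, i.e. `T = Σ_{i,j} eᵢ* ⊗ eⱼ* ⊗ (eᵢ⬝eⱼ)`. -/
noncomputable def mulTensor (k A : Type*) [Field k] [Ring A] [Algebra k A]
    [FiniteDimensional k A] :
    Fin (finrank k A) → Fin (finrank k A) → Fin (finrank k A) → k :=
  fun i j l => (finBasis k A).repr (finBasis k A i * finBasis k A j) l

/-! The map `φ` is surjective, so lifting the basis of `B` to `A` and pushing the basis of `A`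
forward along `φ` exhibits the multiplication tensor of `B` as the image of that of `A` under a
linear map in each of the three factors. Such a map sends every slice to a slice, hence cannot
increase slice rank. -/

section SliceRank

variable {k : Type*} [CommRing k] {ι₁ ι₂ ι₃ : Type*}

lemma sliceRank_le_of_eq_sum {r : ℕ} {T : ι₁ → ι₂ → ι₃ → k} (S : Fin r → ι₁ → ι₂ → ι₃ → k)
    (hS : ∀ m, IsSlice (S m)) (hT : ∀ i j l, T i j l = ∑ m, S m i j l) : sliceRank T ≤ r :=
  Nat.sInf_le ⟨S, hS, hT⟩

lemma exists_isSlice_eq_sum_card [Fintype ι₁] (T : ι₁ → ι₂ → ι₃ → k) :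
    ∃ S : Fin (Fintype.card ι₁) → ι₁ → ι₂ → ι₃ → k,
      (∀ m, IsSlice (S m)) ∧ ∀ i j l, T i j l = ∑ m, S m i j l := by
  classical
  let e := Fintype.equivFin ι₁
  refine ⟨fun m i j l => if i = e.symm m then T i j l else 0, fun m => ?_, fun i j l => ?_⟩
  · refine Or.inl ⟨fun i => if i = e.symm m then 1 else 0, T (e.symm m), fun i j l => ?_⟩
    by_cases h : i = e.symm m <;> simp [h]
  · rw [e.symm.sum_comp (fun i' => if i = i' then T i j l else 0), sum_ite_eq, if_pos (mem_univ i)]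

lemma exists_isSlice_eq_sum_sliceRank [Fintype ι₁] (T : ι₁ → ι₂ → ι₃ → k) :
    ∃ S : Fin (sliceRank T) → ι₁ → ι₂ → ι₃ → k,
      (∀ m, IsSlice (S m)) ∧ ∀ i j l, T i j l = ∑ m, S m i j l :=
  Nat.sInf_mem (s := {r | ∃ S : Fin r → ι₁ → ι₂ → ι₃ → k,
    (∀ m, IsSlice (S m)) ∧ ∀ i j l, T i j l = ∑ m, S m i j l}) ⟨_, exists_isSlice_eq_sum_card T⟩

end SliceRank

section Contraction

variable {k : Type*} [CommRing k] {ι₁ ι₂ ι₃ κ₁ κ₂ κ₃ : Type*}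
  [Fintype ι₁] [Fintype ι₂] [Fintype ι₃]

def tensorMap (X : κ₁ → ι₁ → k) (Y : κ₂ → ι₂ → k) (Z : κ₃ → ι₃ → k)
    (T : ι₁ → ι₂ → ι₃ → k) : κ₁ → κ₂ → κ₃ → k :=
  fun a b c => ∑ i, ∑ j, ∑ l, X a i * Y b j * Z c l * T i j l

lemma IsSlice.tensorMap {T : ι₁ → ι₂ → ι₃ → k} (hT : IsSlice T) (X : κ₁ → ι₁ → k)
    (Y : κ₂ → ι₂ → k) (Z : κ₃ → ι₃ → k) : IsSlice (tensorMap X Y Z T) := by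
  rcases hT with ⟨f, Q, h⟩ | ⟨f, Q, h⟩ | ⟨f, Q, h⟩
  · refine Or.inl ⟨fun a => ∑ i, X a i * f i,
      fun b c => ∑ j, ∑ l, Y b j * Z c l * Q j l, fun a b c => ?_⟩
    simp only [_root_.tensorMap, h]
    rw [sum_mul_sum]
    simp only [mul_sum]
    refine sum_congr rfl fun i _ => sum_congr rfl fun j _ => sum_congr rfl fun l _ => by ring
  · refine Or.inr <| Or.inl ⟨fun b => ∑ j, Y b j * f j,
      fun a c => ∑ i, ∑ l, X a i * Z c l * Q i l, fun a b c => ?_⟩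
    simp only [_root_.tensorMap, h]
    rw [sum_mul_sum]
    simp only [mul_sum]
    rw [sum_comm]
    refine sum_congr rfl fun i _ => sum_congr rfl fun j _ => sum_congr rfl fun l _ => by ring
  · refine Or.inr <| Or.inr ⟨fun c => ∑ l, Z c l * f l,
      fun a b => ∑ i, ∑ j, X a i * Y b j * Q i j, fun a b c => ?_⟩
    simp only [_root_.tensorMap, h]
    rw [sum_mul_sum]
    simp only [mul_sum]
    rw [sum_comm_cycle]
    exact sum_congr rfl fun l _ => sum_congr rfl fun i _ => sum_congr rfl fun j _ => by ring

lemma tensorMap_eq_sum {μ : Type*} [Fintype μ] {T : ι₁ → ι₂ → ι₃ → k}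
    {S : μ → ι₁ → ι₂ → ι₃ → k} (hT : ∀ i j l, T i j l = ∑ m, S m i j l) (X : κ₁ → ι₁ → k)
    (Y : κ₂ → ι₂ → k) (Z : κ₃ → ι₃ → k) (a : κ₁) (b : κ₂) (c : κ₃) :
    tensorMap X Y Z T a b c = ∑ m, tensorMap X Y Z (S m) a b c := by
  simp only [_root_.tensorMap, hT, mul_sum]
  exact (sum_congr rfl fun i _ => sum_congr rfl fun j _ => sum_comm).trans sum_comm_cycle

theorem sliceRank_tensorMap_le (X : κ₁ → ι₁ → k) (Y : κ₂ → ι₂ → k) (Z : κ₃ → ι₃ → k)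
    (T : ι₁ → ι₂ → ι₃ → k) : sliceRank (tensorMap X Y Z T) ≤ sliceRank T := by
  obtain ⟨S, hS, hT⟩ := exists_isSlice_eq_sum_sliceRank T
  exact sliceRank_le_of_eq_sum (fun m => tensorMap X Y Z (S m)) (fun m => (hS m).tensorMap X Y Z)
    (tensorMap_eq_sum hT X Y Z)

end Contraction

section MulTensor

variable {k A : Type*} [Field k] [Ring A] [Algebra k A] [FiniteDimensional k A]

lemma mul_eq_sum_mulTensor (x y : A) :
    x * y = ∑ p, ∑ q, ∑ m, ((finBasis k A).repr x p * (finBasis k A).repr y q *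
      mulTensor k A p q m) • finBasis k A m := by
  set b := finBasis k A
  conv_lhs => rw [← b.sum_repr x, ← b.sum_repr y]
  simp only [sum_mul_sum, smul_mul_smul_comm]
  refine sum_congr rfl fun p _ => sum_congr rfl fun q _ => ?_
  conv_lhs => rw [← b.sum_repr (b p * b q)]
  simp only [smul_sum, smul_smul, mulTensor, b]

lemma exists_mulTensor_eq_tensorMap {B : Type*} [Ring B] [Algebra k B] [FiniteDimensional k B]
    (φ : A →ₐ[k] B) (hφ : Function.Surjective φ) :
    ∃ X Z, mulTensor k B = tensorMap X X Z (mulTensor k A) := by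
  choose a ha using fun i => hφ (finBasis k B i)
  refine ⟨fun i p => (finBasis k A).repr (a i) p,
    fun l m => (finBasis k B).repr (φ (finBasis k A m)) l, ?_⟩
  ext i j l
  rw [mulTensor, ← ha i, ← ha j, ← map_mul, mul_eq_sum_mulTensor (k := k)]
  simp only [map_sum, map_smul, Finsupp.coe_finsetSum, Finset.sum_apply, Finsupp.smul_apply,
    smul_eq_mul, tensorMap]
  exact sum_congr rfl fun p _ => sum_congr rfl fun q _ => sum_congr rfl fun m _ => by ring

end MulTensor

theorem sliceRank_quotient_le_general {k A B : Type*} [Field k]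
    [Ring A] [Algebra k A] [FiniteDimensional k A]
    [Ring B] [Algebra k B] [FiniteDimensional k B]
    (φ : A →ₐ[k] B) (hφ : Function.Surjective φ) :
    sliceRank (mulTensor k B) ≤ sliceRank (mulTensor k A) := by
  obtain ⟨X, Z, h⟩ := exists_mulTensor_eq_tensorMap φ hφ
  rw [h]
  exact sliceRank_tensorMap_le X X Z _

/-- If `I` is a two-sided ideal of a finite-dimensional `k`-algebra `A`, then the
slice rank of the multiplication tensor of the quotient `A/I` (presented as any
finite-dimensional algebra `B` together with a surjective algebra map `A → B` whose kernel
is `I`) is at most the slice rank of the multiplication tensor of `A`. -/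
theorem sliceRank_quotient_le {k A B : Type*} [Field k]
    [Ring A] [Algebra k A] [FiniteDimensional k A]
    [Ring B] [Algebra k B] [FiniteDimensional k B]
    (I : TwoSidedIdeal A) (φ : A →ₐ[k] B) (hφ : Function.Surjective φ)
    (hker : ∀ a : A, φ a = 0 ↔ a ∈ I) :
    sliceRank (mulTensor k B) ≤ sliceRank (mulTensor k A) :=
  sliceRank_quotient_le_general φ hφ
end

section
/- For a prime p and an algebraically closed field k of characteristic p, the symmetric power representations Sym^d(k²) of SL(2,p) for 0 ≤ d ≤ p-1 (given by the action of SL(2,p) on homogeneous polynomials of degree d in two variables) are pairwise non-isomorphic irreducible representations of dimensions 1, 2, ..., p. -/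
/-! A nonzero `SL(2,p)`-stable subspace `W` of `Sym^d(k²)`, `d < p`, is everything. For the
transvection `x ↦ x + c y`, `g_c f = ∑_{j ≤ d} c^j w_j` is a polynomial in `c` of degree `≤ d`,
so evaluating at the `d + 1` distinct points `c = 0, …, d` of `𝔽_p` and inverting the Vandermonde
matrix puts every `w_j` in `W`; for `j` the top `x`-degree of `f`, `w_j` is a nonzero multiple of
`y^d`. The lower transvections `y ↦ y + c x` then give `(d choose j) x^j y^(d-j) ∈ W` in the same
way, and `d < p` makes these binomial coefficients units. The representations have the distinct
dimensions `d + 1`, hence are pairwise non-isomorphic. -/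

open Matrix MvPolynomial Module

/-- Linear substitution of the variables by `g⁻¹`, as an algebra endomorphism of `k[x,y]`:
`(g · f)(x) = f(g⁻¹ · x)`. -/
noncomputable def substAlg (p : ℕ) [Fact p.Prime] (k : Type) [Field k] [CharP k p]
    (g : SpecialLinearGroup (Fin 2) (ZMod p)) :
    MvPolynomial (Fin 2) k →ₐ[k] MvPolynomial (Fin 2) k :=
  aeval fun i => ∑ j, C (ZMod.castHom dvd_rfl k
    (((g⁻¹ : SpecialLinearGroup (Fin 2) (ZMod p)) : Matrix (Fin 2) (Fin 2) (ZMod p)) i j)) * X j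

lemma substAlg_mem (p : ℕ) [Fact p.Prime] (k : Type) [Field k] [CharP k p]
    (g : SpecialLinearGroup (Fin 2) (ZMod p)) (d : ℕ)
    (f : MvPolynomial (Fin 2) k) (hf : f ∈ homogeneousSubmodule (Fin 2) k d) :
    substAlg p k g f ∈ homogeneousSubmodule (Fin 2) k d := by
  rw [mem_homogeneousSubmodule] at hf ⊢
  have := hf.aeval (fun i => ∑ j, C (ZMod.castHom dvd_rfl k
    (((g⁻¹ : SpecialLinearGroup (Fin 2) (ZMod p)) : Matrix (Fin 2) (Fin 2) (ZMod p)) i j)) * X j)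
    (n := 1) ?_
  · simpa [substAlg] using this
  · intro i
    exact IsHomogeneous.sum _ _ _ fun j _ => (isHomogeneous_X _ _).C_mul _

/-- The action of `SL(2,p)` on the space `Sym^d(k²)` of homogeneous polynomials of
degree `d` in two variables, by linear substitution. -/
noncomputable def symAction (p : ℕ) [Fact p.Prime] (k : Type) [Field k] [CharP k p] (d : ℕ)
    (g : SpecialLinearGroup (Fin 2) (ZMod p)) :
    homogeneousSubmodule (Fin 2) k d →ₗ[k] homogeneousSubmodule (Fin 2) k d :=
  LinearMap.restrict (substAlg p k g).toLinearMap (substAlg_mem p k g d)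

theorem Submodule.mem_of_forall_sum_pow_smul_mem {k M : Type*} [Field k] [AddCommGroup M]
    [Module k M] (W : Submodule k M) {n : ℕ} {c : Fin n → k} (hc : Function.Injective c)
    {v : ℕ → M} (h : ∀ i, ∑ j ∈ Finset.range n, c i ^ j • v j ∈ W) {j : ℕ} (hj : j < n) :
    v j ∈ W := by
  set A := vandermonde c
  have hA : A⁻¹ * A = 1 := nonsing_inv_mul A (det_vandermonde_ne_zero_iff.mpr hc).isUnit
  have hv : v j = ∑ i, A⁻¹ ⟨j, hj⟩ i • ∑ l : Fin n, A i l • v l := by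
    simp only [Finset.smul_sum, smul_smul]
    rw [Finset.sum_comm]
    simp only [← Finset.sum_smul, ← mul_apply, hA, one_apply, ite_smul, one_smul, zero_smul]
    simp
  rw [hv]
  refine Submodule.sum_mem _ fun i _ => Submodule.smul_mem _ _ ?_
  simpa [A, vandermonde_apply, Fin.sum_univ_eq_sum_range (fun l => c i ^ l • v l)] using h i

theorem Submodule.mem_of_forall_sum_zmod_pow_smul_mem {p : ℕ} {k M : Type*}
    [Field k] [CharP k p] [AddCommGroup M] [Module k M] (W : Submodule k M) {d : ℕ} (hd : d < p)
    {v : ℕ → M} (h : ∀ c : ZMod p, ∑ j ∈ Finset.range (d + 1), (c.cast : k) ^ j • v j ∈ W)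
    {j : ℕ} (hj : j ≤ d) : v j ∈ W := by
  have hinj : Function.Injective fun i : Fin (d + 1) => ((i : ℕ) : k) := fun i i' hii' =>
    Fin.ext <| CharP.natCast_injOn_Iio k p (by simp; omega) (by simp; omega) hii'
  refine W.mem_of_forall_sum_pow_smul_mem hinj (fun i => ?_) (Nat.lt_succ_of_le hj)
  simpa [ZMod.cast_natCast] using h (i : ℕ)

theorem Nat.cast_choose_ne_zero_of_lt {p : ℕ} [Fact p.Prime] {R : Type*} [AddMonoidWithOne R]
    [CharP R p] {d j : ℕ} (hd : d < p) (hj : j ≤ d) : (d.choose j : R) ≠ 0 := by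
  rw [Ne, CharP.cast_eq_zero_iff R p]
  intro hdvd
  have hfac : d.choose j ∣ d.factorial :=
    Dvd.intro _ ((mul_assoc _ _ _).symm.trans (Nat.choose_mul_factorial_mul_factorial hj))
  exact absurd ((Fact.out : p.Prime).dvd_factorial.mp (hdvd.trans hfac)) (not_le.mpr hd)

theorem MvPolynomial.finrank_homogeneousSubmodule {σ k : Type*} [Fintype σ] [Field k] (n : ℕ) :
    finrank k (homogeneousSubmodule σ k n) = (Fintype.card σ + n - 1).choose n := by
  classical
  rw [homogeneousSubmodule_eq_finsupp_supported,
    (AddMonoidAlgebra.supportedEquivFinsupp (R := k) (S := k) _).finrank_eq]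
  have : {d : σ →₀ ℕ | d.degree = n} =
      ((Finset.univ : Finset σ).finsuppAntidiag n : Set (σ →₀ ℕ)) := by
    ext d; simp [Finsupp.degree_eq_sum]
  rw [this, finrank_finsupp_self]
  simp [Finset.card_finsuppAntidiag_nat_eq_choose]

theorem MvPolynomial.finrank_homogeneousSubmodule_fin_two {k : Type*} [Field k] (d : ℕ) :
    finrank k (homogeneousSubmodule (Fin 2) k d) = d + 1 := by
  simp [finrank_homogeneousSubmodule, add_comm 1 d]

namespace MvPolynomial

variable {R : Type*} [CommSemiring R]

noncomputable def xyMonomial (d a : ℕ) : MvPolynomial (Fin 2) R := X 0 ^ a * X 1 ^ (d - a)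

theorem xyMonomial_eq_monomial (d a : ℕ) :
    (xyMonomial d a : MvPolynomial (Fin 2) R) =
      monomial (Finsupp.single 0 a + Finsupp.single 1 (d - a)) 1 := by
  simp [xyMonomial, X_pow_eq_monomial, monomial_mul]

variable (R) in
theorem homogeneousSubmodule_fin_two_eq_span (d : ℕ) :
    homogeneousSubmodule (Fin 2) R d =
      Submodule.span R (xyMonomial d '' ↑(Finset.range (d + 1))) := by
  rw [homogeneousSubmodule_eq_finsupp_supported, AddMonoidAlgebra.supported_eq_span_single]
  congr 1
  ext f
  simp only [Set.mem_image, Set.mem_ofPred_eq, Finset.coe_range, Set.mem_Iio,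
    xyMonomial_eq_monomial]
  constructor
  · rintro ⟨σ, hσ, rfl⟩
    rw [Finsupp.degree_eq_sum, Fin.sum_univ_two] at hσ
    refine ⟨σ 0, by omega, ?_⟩
    have hσ' : Finsupp.single 0 (σ 0) + Finsupp.single 1 (σ 1) = σ :=
      Finsupp.ext fun i => by fin_cases i <;> simp
    rw [← hσ, Nat.add_sub_cancel_left, hσ']
    rfl
  · rintro ⟨a, ha, rfl⟩
    refine ⟨_, ?_, rfl⟩
    simp [Finsupp.degree_eq_sum, Fin.sum_univ_two]
    omega

theorem IsHomogeneous.exists_eq_sum_smul_xyMonomial {d : ℕ} {f : MvPolynomial (Fin 2) R}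
    (hf : f.IsHomogeneous d) :
    ∃ c : ℕ → R, f = ∑ a ∈ Finset.range (d + 1), c a • xyMonomial d a := by
  rw [← mem_homogeneousSubmodule, homogeneousSubmodule_fin_two_eq_span,
    Submodule.mem_span_image_finset_iff_exists_fun'] at hf
  obtain ⟨c, hc⟩ := hf
  exact ⟨c, hc.symm⟩

theorem add_C_mul_pow_mul_pow_eq_sum (t : R) {d a : ℕ} (ha : a ≤ d) :
    (X 0 + C t * X 1) ^ a * X 1 ^ (d - a) =
      ∑ j ∈ Finset.range (d + 1), t ^ j • ((a.choose j : R) • xyMonomial d (a - j)) := by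
  rw [add_comm, add_pow, Finset.sum_mul]
  refine Finset.sum_subset_zero_on_sdiff (Finset.range_subset_range.mpr (by omega)) ?_ ?_
  · intro j hj
    simp [Nat.choose_eq_zero_of_lt (by simpa using (Finset.mem_sdiff.mp hj).2 : a < j)]
  · intro j hj
    have hja : j ≤ a := Nat.lt_succ_iff.mp (Finset.mem_range.mp hj)
    simp only [xyMonomial, smul_eq_C_mul, mul_pow, ← C_pow, map_natCast]
    rw [show d - (a - j) = j + (d - a) by omega, pow_add]
    ring

theorem add_C_mul_pow_eq_sum (t : R) (d : ℕ) :
    (X 1 + C t * X 0) ^ d =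
      ∑ j ∈ Finset.range (d + 1), t ^ j • ((d.choose j : R) • xyMonomial d j) := by
  rw [add_comm, add_pow]
  refine Finset.sum_congr rfl fun j _ => ?_
  simp only [xyMonomial, smul_eq_C_mul, mul_pow, ← C_pow, map_natCast]
  ring

end MvPolynomial

section SubstAlg

variable {p : ℕ} [Fact p.Prime] {k : Type} [Field k] [CharP k p]

theorem substAlg_one : substAlg p k 1 = AlgHom.id k _ := by
  ext i : 1
  fin_cases i <;> simp [substAlg, one_apply]

theorem substAlg_mul (g h : SpecialLinearGroup (Fin 2) (ZMod p)) :
    substAlg p k (g * h) = (substAlg p k g).comp (substAlg p k h) := by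
  ext i : 1
  simp only [substAlg, AlgHom.comp_apply, aeval_X, _root_.map_mul, aeval_C, _root_.mul_inv_rev,
    Matrix.SpecialLinearGroup.coe_mul, Matrix.mul_apply, Fin.sum_univ_two, map_add, algebraMap_eq]
  fin_cases i <;> ring

theorem symAction_one (d : ℕ) : symAction p k d 1 = LinearMap.id := by
  ext f : 2
  simp [symAction, substAlg_one]

theorem symAction_mul (d : ℕ) (g h : SpecialLinearGroup (Fin 2) (ZMod p)) :
    symAction p k d (g * h) = symAction p k d g ∘ₗ symAction p k d h := by
  ext f : 2
  simp only [symAction, substAlg_mul]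
  rfl

theorem substAlg_inv_transvection_X {i j : Fin 2} (hij : i ≠ j) (c : ZMod p) (l : Fin 2) :
    substAlg p k (SpecialLinearGroup.transvection hij c)⁻¹ (X l) =
      X l + if l = i then C (c.cast : k) * X j else 0 := by
  simp only [substAlg, inv_inv, aeval_X, SpecialLinearGroup.transvection_coe]
  fin_cases i <;> fin_cases j <;> fin_cases l <;>
    simp_all [Fin.sum_univ_two, one_apply, single_apply, add_comm]

theorem substAlg_inv_transvection_xyMonomial (c : ZMod p) {d a : ℕ} (ha : a ≤ d) :
    substAlg p k (SpecialLinearGroup.transvection zero_ne_one c)⁻¹ (xyMonomial d a) =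
      ∑ j ∈ Finset.range (d + 1), (c.cast : k) ^ j • ((a.choose j : k) • xyMonomial d (a - j)) := by
  simp [xyMonomial, substAlg_inv_transvection_X, add_C_mul_pow_mul_pow_eq_sum _ ha]

theorem substAlg_inv_transvection_xyMonomial_zero (c : ZMod p) (d : ℕ) :
    substAlg p k (SpecialLinearGroup.transvection one_ne_zero c)⁻¹ (xyMonomial d 0) =
      ∑ j ∈ Finset.range (d + 1), (c.cast : k) ^ j • ((d.choose j : k) • xyMonomial d j) := by
  simp [xyMonomial, substAlg_inv_transvection_X, add_C_mul_pow_eq_sum]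

theorem substAlg_inv_transvection_sum_smul_xyMonomial (t : ZMod p) (c : ℕ → k) (d : ℕ) :
    substAlg p k (SpecialLinearGroup.transvection zero_ne_one t)⁻¹
        (∑ a ∈ Finset.range (d + 1), c a • xyMonomial d a) =
      ∑ j ∈ Finset.range (d + 1), (t.cast : k) ^ j •
        ∑ a ∈ Finset.range (d + 1), (c a * a.choose j) • xyMonomial d (a - j) := by
  simp only [map_sum, map_smul, Finset.smul_sum]
  rw [Finset.sum_comm]
  refine Finset.sum_congr rfl fun a ha => ?_
  rw [substAlg_inv_transvection_xyMonomial t (Nat.lt_succ_iff.mp (Finset.mem_range.mp ha)),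
    Finset.smul_sum]
  refine Finset.sum_congr rfl fun j _ => ?_
  simp only [smul_smul]
  congr 1
  ring

theorem xyMonomial_zero_mem_of_forall_substAlg_mem {d : ℕ} (hd : d < p)
    {W : Submodule k (MvPolynomial (Fin 2) k)} (hW : ∀ g, ∀ f ∈ W, substAlg p k g f ∈ W)
    {f : MvPolynomial (Fin 2) k} (hfW : f ∈ W) (hf : f.IsHomogeneous d) (hf0 : f ≠ 0) :
    xyMonomial d 0 ∈ W := by
  classical
  obtain ⟨c, rfl⟩ := hf.exists_eq_sum_smul_xyMonomial
  obtain ⟨a₀, ha₀, hmax⟩ : ∃ a₀ ∈ (Finset.range (d + 1)).filter (c · ≠ 0),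
      ∀ a ∈ (Finset.range (d + 1)).filter (c · ≠ 0), a ≤ a₀ :=
    Finset.exists_max_image _ id <| Finset.filter_nonempty_iff.mpr <| by
      by_contra! h
      exact hf0 (Finset.sum_eq_zero fun a ha => by rw [h a ha, zero_smul])
  simp only [Finset.mem_filter, Finset.mem_range] at ha₀ hmax
  have hw := W.mem_of_forall_sum_zmod_pow_smul_mem hd
    (fun t => substAlg_inv_transvection_sum_smul_xyMonomial t c d ▸ hW _ _ hfW)
    (Nat.lt_succ_iff.mp ha₀.1)
  have hvanish : ∀ a ∈ Finset.range (d + 1), a ≠ a₀ →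
      (c a * a.choose a₀) • (xyMonomial d (a - a₀) : MvPolynomial (Fin 2) k) = 0 := by
    intro a ha hne
    obtain hlt | hgt := lt_or_gt_of_ne hne
    · simp [Nat.choose_eq_zero_of_lt hlt]
    · have hca : c a = 0 := by
        by_contra hca
        exact absurd (hmax a ⟨Finset.mem_range.mp ha, hca⟩) (not_le.mpr hgt)
      simp [hca]
  rw [Finset.sum_eq_single a₀ hvanish (by simp; omega)] at hw
  simpa [W.smul_mem_iff ha₀.2] using hw

theorem homogeneousSubmodule_le_of_xyMonomial_zero_mem {d : ℕ} (hd : d < p)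
    {W : Submodule k (MvPolynomial (Fin 2) k)} (hW : ∀ g, ∀ f ∈ W, substAlg p k g f ∈ W)
    (h₀ : xyMonomial d 0 ∈ W) : homogeneousSubmodule (Fin 2) k d ≤ W := by
  rw [homogeneousSubmodule_fin_two_eq_span, Submodule.span_le]
  rintro _ ⟨j, hj, rfl⟩
  have hj : j ≤ d := Nat.lt_succ_iff.mp (Finset.mem_range.mp hj)
  have hmem : (d.choose j : k) • xyMonomial d j ∈ W :=
    W.mem_of_forall_sum_zmod_pow_smul_mem hd (fun c => by
      rw [← substAlg_inv_transvection_xyMonomial_zero]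
      exact hW _ _ h₀) hj
  exact (W.smul_mem_iff (Nat.cast_choose_ne_zero_of_lt hd hj)).mp hmem

theorem symAction_irreducible {d : ℕ} (hd : d < p)
    (U : Submodule k (homogeneousSubmodule (Fin 2) k d))
    (hU : ∀ g, ∀ u ∈ U, symAction p k d g u ∈ U) : U = ⊥ ∨ U = ⊤ := by
  refine or_iff_not_imp_left.mpr fun hU0 => ?_
  obtain ⟨u, huU, hu0⟩ := U.ne_bot_iff.mp hU0
  set W := U.map (homogeneousSubmodule (Fin 2) k d).subtype
  have hW : ∀ g, ∀ f ∈ W, substAlg p k g f ∈ W := by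
    rintro g _ ⟨v, hv, rfl⟩
    exact ⟨_, hU g v hv, rfl⟩
  have hle := homogeneousSubmodule_le_of_xyMonomial_zero_mem hd hW <|
    xyMonomial_zero_mem_of_forall_substAlg_mem hd hW ⟨u, huU, rfl⟩ u.2 (by simpa using hu0)
  refine eq_top_iff.mpr fun v _ => ?_
  obtain ⟨v', hv'U, hv'⟩ := hle v.2
  rwa [Subtype.ext hv'] at hv'U

end SubstAlg

theorem symPow_representations_general (p : ℕ) [Fact p.Prime] (k : Type) [Field k]
    [CharP k p] :
    (∀ d : ℕ, symAction p k d 1 = LinearMap.id) ∧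
    (∀ (d : ℕ) (g h : SpecialLinearGroup (Fin 2) (ZMod p)),
      symAction p k d (g * h) = symAction p k d g ∘ₗ symAction p k d h) ∧
    (∀ d : ℕ, finrank k (homogeneousSubmodule (Fin 2) k d) = d + 1) ∧
    (∀ d : ℕ, d ≤ p - 1 →
      ∀ U : Submodule k (homogeneousSubmodule (Fin 2) k d),
        (∀ g, ∀ u ∈ U, symAction p k d g u ∈ U) → U = ⊥ ∨ U = ⊤) ∧
    (∀ d e : ℕ, d ≤ p - 1 → e ≤ p - 1 → d ≠ e →
      ¬ ∃ φ : homogeneousSubmodule (Fin 2) k d ≃ₗ[k] homogeneousSubmodule (Fin 2) k e,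
        ∀ g v, φ (symAction p k d g v) = symAction p k e g (φ v)) := by
  have hp := (Fact.out : p.Prime).pos
  refine ⟨symAction_one, symAction_mul, finrank_homogeneousSubmodule_fin_two,
    fun d hd => symAction_irreducible (by omega), ?_⟩
  rintro d e - - hde ⟨φ, -⟩
  have := φ.finrank_eq
  rw [finrank_homogeneousSubmodule_fin_two, finrank_homogeneousSubmodule_fin_two] at this
  omega

/-- For an algebraically closed field `k` of characteristic `p`, the symmetric
power actions `Sym^d(k²)` of `SL(2,p)`, `0 ≤ d ≤ p-1`, are representations (the action is
multiplicative and unital), of dimensions `d+1` (i.e. `1, 2, ..., p`), irreducible, and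
pairwise non-isomorphic. -/
theorem symPow_representations (p : ℕ) [Fact p.Prime] (k : Type) [Field k] [IsAlgClosed k]
    [CharP k p] :
    (∀ d : ℕ, symAction p k d 1 = LinearMap.id) ∧
    (∀ (d : ℕ) (g h : SpecialLinearGroup (Fin 2) (ZMod p)),
      symAction p k d (g * h) = symAction p k d g ∘ₗ symAction p k d h) ∧
    (∀ d : ℕ, finrank k (homogeneousSubmodule (Fin 2) k d) = d + 1) ∧
    (∀ d : ℕ, d ≤ p - 1 →
      ∀ U : Submodule k (homogeneousSubmodule (Fin 2) k d),
        (∀ g, ∀ u ∈ U, symAction p k d g u ∈ U) → U = ⊥ ∨ U = ⊤) ∧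
    (∀ d e : ℕ, d ≤ p - 1 → e ≤ p - 1 → d ≠ e →
      ¬ ∃ φ : homogeneousSubmodule (Fin 2) k d ≃ₗ[k] homogeneousSubmodule (Fin 2) k e,
        ∀ g v, φ (symAction p k d g v) = symAction p k e g (φ v)) :=
  symPow_representations_general p k
end

section
/- For a prime p ≥ 5, any multiplicative 3-matching in PSL(2,p) has size at most C·p^{8/3} for some absolute constant C, assuming that PSL(2,p) contains no product-free triple of subsets each of size greater than C'·p^{8/3}. -/
/-!
If `(a, b, c)` is a 3-matching and `I`, `J` are disjoint sets of indices, then `a i * b j * c k`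
is never `1` for `i ∈ I`, `j ∈ J`, so `(a(I), b(J), c(everything))` is a product-free triple.
Splitting the indices into two halves makes all three sets of size at least `⌊m/2⌋`, and
Gowers's bound then gives `m ≤ 2 C' p^(8/3) + 1`.
-/

open Matrix Finset Function

section Matching

variable {ι G : Type*} [Mul G] [One G]

def IsMulMatching (a b c : ι → G) : Prop :=
  ∀ i j k, a i * b j * c k = 1 ↔ i = j ∧ j = k

def IsProductFreeTriple (A B D : Finset G) : Prop :=
  ∀ a ∈ A, ∀ b ∈ B, ∀ d ∈ D, a * b * d ≠ 1

namespace IsMulMatching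

variable {a b c : ι → G} (h : IsMulMatching a b c)
include h

theorem mul_mul_self (i : ι) : a i * b i * c i = 1 :=
  (h i i i).mpr ⟨rfl, rfl⟩

theorem injective_left : Injective a := fun i j hij =>
  ((h i j j).mp (hij ▸ h.mul_mul_self j)).1

theorem injective_mid : Injective b := fun i j hij =>
  ((h j i j).mp (hij ▸ h.mul_mul_self j)).1.symm

theorem injective_right : Injective c := fun i j hij =>
  ((h j j i).mp (hij ▸ h.mul_mul_self j)).2.symm

theorem isProductFreeTriple_image [DecidableEq G] {I J : Finset ι} (hIJ : Disjoint I J)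
    (K : Finset ι) : IsProductFreeTriple (I.image a) (J.image b) (K.image c) := by
  simp only [IsProductFreeTriple, mem_image, forall_exists_index, and_imp]
  rintro _ i hi rfl _ j hj rfl _ k - rfl hijk
  exact disjoint_left.mp hIJ hi (((h i j k).mp hijk).1 ▸ hj)

theorem card_le_two_mul_add_one [Fintype ι] [DecidableEq G] {N : ℝ}
    (hfree : ∀ A B D : Finset G, IsProductFreeTriple A B D →
      (A.card : ℝ) ≤ N ∨ (B.card : ℝ) ≤ N ∨ (D.card : ℝ) ≤ N) :
    (Fintype.card ι : ℝ) ≤ 2 * N + 1 := by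
  classical
  set n := Fintype.card ι
  obtain ⟨I, -, hI⟩ := exists_subset_card_eq (s := (univ : Finset ι)) (n := n / 2)
    (by simpa [n] using n.div_le_self 2)
  have hIc : Iᶜ.card = n - n / 2 := by rw [card_compl, hI]
  have hhalf : (n : ℝ) ≤ 2 * ((n / 2 : ℕ) : ℝ) + 1 := by
    exact_mod_cast (by omega : n ≤ 2 * (n / 2) + 1)
  have hrest : ((n / 2 : ℕ) : ℝ) ≤ ((n - n / 2 : ℕ) : ℝ) := by
    exact_mod_cast (by omega : n / 2 ≤ n - n / 2)
  rcases hfree _ _ _ (h.isProductFreeTriple_image disjoint_compl_right univ) with hA | hB | hD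
  · rw [card_image_of_injective _ h.injective_left, hI] at hA
    linarith
  · rw [card_image_of_injective _ h.injective_mid, hIc] at hB
    linarith
  · rw [card_image_of_injective _ h.injective_right, card_univ] at hD
    linarith [(n.cast_nonneg : (0 : ℝ) ≤ n)]

end IsMulMatching

end Matching

/-- Assuming Gowers's bound (no product-free triple of subsets of `PSL(2,p)`
each of size greater than `C' * p^(8/3)`), every multiplicative 3-matching in `PSL(2,p)`
has size at most `C * p^(8/3)` for an absolute constant `C`. -/
theorem matching_bound_PSL (C' : ℝ) :
    ∃ C : ℝ, ∀ (p : ℕ) [Fact p.Prime], 5 ≤ p →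
      (∀ A B D : Finset (ProjectiveSpecialLinearGroup (Fin 2) (ZMod p)),
        (∀ a ∈ A, ∀ b ∈ B, ∀ d ∈ D, a * b * d ≠ 1) →
        (A.card : ℝ) ≤ C' * (p : ℝ) ^ ((8 : ℝ) / 3) ∨
        (B.card : ℝ) ≤ C' * (p : ℝ) ^ ((8 : ℝ) / 3) ∨
        (D.card : ℝ) ≤ C' * (p : ℝ) ^ ((8 : ℝ) / 3)) →
      ∀ (m : ℕ) (a b c : Fin m → ProjectiveSpecialLinearGroup (Fin 2) (ZMod p)),
        (∀ i j k : Fin m, a i * b j * c k = 1 ↔ i = j ∧ j = k) →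
        (m : ℝ) ≤ C * (p : ℝ) ^ ((8 : ℝ) / 3) := by
  refine ⟨2 * max C' 0 + 1, fun p _ hp hgowers m a b c hmatch => ?_⟩
  set X : ℝ := (p : ℝ) ^ ((8 : ℝ) / 3)
  have hX : 1 ≤ X := Real.one_le_rpow (by exact_mod_cast (by omega : 1 ≤ p)) (by norm_num)
  have hm : (m : ℝ) ≤ 2 * (C' * X) + 1 := by
    simpa using IsMulMatching.card_le_two_mul_add_one hmatch hgowers
  have hC' : C' * X ≤ max C' 0 * X := mul_le_mul_of_nonneg_right (le_max_left _ _) (by linarith)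
  linarith
end
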